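/- arXiv:2311.15381 — 2 statements merged into one kernel-verified Lean document; each statement's English description precedes it below -/
import Mathlib

section
/- Let G be a transition graph with n ≥ 1 vertices and a label universum of size m ≥ 1, and let ε > 0 be a real number. If the family F(G) has the ε-separability property, then |F(G)| ≤ m·n^(3/ε) + m^(6/ε), where the powers are real powers. -/
structure TransitionGraph (V E U : Type*) where
  src : E → V
  tgt : E → V
  s : V
  t : V
  lab : E → Option U

namespace TransitionGraph

variable {V E U : Type*}

def IsSTPath (G : TransitionGraph V E U) (P : List E) : Prop :=
  List.Chain' (fun e f => G.tgt e = G.src f) P ∧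
    ((P = [] ∧ G.s = G.t) ∨
      ∃ h : P ≠ [], G.src (P.head h) = G.s ∧ G.tgt (P.getLast h) = G.t)

def labelSet [DecidableEq U] (G : TransitionGraph V E U) (P : List E) : Finset U :=
  (P.filterMap G.lab).toFinset

def labelFamily [DecidableEq U] (G : TransitionGraph V E U) : Set (Finset U) :=
  {S | ∃ P : List E, G.IsSTPath P ∧ G.labelSet P = S}

end TransitionGraph

/-- The `ε`-separability property for a family of finite sets. -/
def SepProperty {α : Type*} [DecidableEq α] (ε : ℝ) (F : Set (Finset α)) : Prop :=
  ∀ S₁ ∈ F, ∀ S₂ ∈ F, S₁ ≠ S₂ →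
    (6 : ℝ) ≤ ε * (max S₁.card S₂.card : ℕ) →
    ε * (max S₁.card S₂.card : ℕ) < ((symmDiff S₁ S₂).card : ℝ)

/-!
For a member `S` of `F(G)` with `ε |S| ≥ 6` fix an `(s,t)`-path realizing it, put
`d = ⌈ε |S| / 3⌉`, and record `|S|` together with the vertices at which the path has collected
`d, 2d, …, ⌊3/ε⌋ d` distinct labels (after `(⌊3/ε⌋ + 1) d ≥ |S|` labels it may as well be at `t`).
If `S₁` and `S₂` have the same record, replacing the block of the path of `S₂` between two
consecutive checkpoints by the corresponding block of the path of `S₁` gives an `(s,t)`-path;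
once the labels of `S₁` before that block are known to lie in `S₂`, its label set differs from
`S₂` in at most `2d ≤ ε |S₂|` elements, so it is `S₂` by separability. Block by block
`S₁ ⊆ S₂`, and symmetrically, so there are at most `m n^⌊3/ε⌋` such sets. The sets with
`ε |S| < 6` number at most `∑_{k ≤ 6/ε} C(m, k) ≤ m^⌊6/ε⌋` when `m ≥ 2` and `ε < 3`; if `ε ≥ 3`
or `m = 1` there are at most `m + 1` sets at all.
-/

lemma Real.pow_floor_le_rpow {x y : ℝ} (hx : 1 ≤ x) (hy : 0 ≤ y) : x ^ ⌊y⌋₊ ≤ x ^ y := by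
  rw [← Real.rpow_natCast]
  exact Real.rpow_le_rpow_of_exponent_le hx (Nat.floor_le hy)

open Finset in
lemma Nat.sum_range_choose_le_pow {m t : ℕ} (hm : 2 ≤ m) (ht : 2 ≤ t) :
    ∑ k ∈ range (t + 1), m.choose k ≤ m ^ t := by
  induction t, ht using Nat.le_induction with
  | base =>
    have h2 : m.choose 2 * 2 ≤ m * (m - 1) := by
      rw [Nat.choose_two_right]; exact Nat.div_mul_le_self _ _
    simp only [sum_range_succ, sum_range_zero, Nat.choose_zero_right, Nat.choose_one_right]
    obtain ⟨k, rfl⟩ : ∃ k, m = k + 2 := ⟨m - 2, by omega⟩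
    rw [show k + 2 - 1 = k + 1 by omega] at h2
    nlinarith
  | succ t ht ih =>
    have hchoose : m.choose (t + 1) * Nat.factorial 3 ≤ m ^ (t + 1) :=
      calc m.choose (t + 1) * Nat.factorial 3 ≤ m.choose (t + 1) * Nat.factorial (t + 1) :=
            Nat.mul_le_mul_left _ (Nat.factorial_le (by omega))
        _ = m.descFactorial (t + 1) := by rw [Nat.descFactorial_eq_factorial_mul_choose, mul_comm]
        _ ≤ m ^ (t + 1) := Nat.descFactorial_le_pow _ _
    have hpow : m ^ t * 2 ≤ m ^ (t + 1) := by rw [pow_succ]; exact Nat.mul_le_mul_left _ hm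
    rw [sum_range_succ]
    simp only [Nat.factorial] at hchoose
    omega

namespace Finset

variable {α : Type*}

lemma symmDiff_splice_subset [DecidableEq α] {A M A' B' C' : Finset α} (hA : A ⊆ B' ∪ C')
    (hA' : A' ⊆ B') : symmDiff (A' ∪ M ∪ C') (B' ∪ C') ⊆ (M \ A) ∪ (B' \ A') := by
  intro x
  have := @hA x
  have := @hA' x
  simp only [mem_symmDiff, mem_union, mem_sdiff] at *
  tauto

variable [Fintype α]

lemma ncard_setOf_card_le (t : ℕ) :
    {S : Finset α | #S ≤ t}.ncard ≤ ∑ k ∈ range (t + 1), (Fintype.card α).choose k := by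
  classical
  calc {S : Finset α | #S ≤ t}.ncard
      ≤ #((range (t + 1)).biUnion fun k => powersetCard k (univ : Finset α)) := by
        rw [← Set.ncard_coe_finset]
        refine Set.ncard_le_ncard (fun S (hS : #S ≤ t) => ?_) (finite_toSet _)
        simp [hS]
    _ ≤ ∑ k ∈ range (t + 1), (Fintype.card α).choose k := card_biUnion_le.trans_eq (by simp)

lemma ncard_le_card_add_one_of_card_le_one (F : Set (Finset α)) (hα : Fintype.card α ≤ 1) :
    F.ncard ≤ Fintype.card α + 1 :=
  calc F.ncard ≤ Nat.card (Finset α) := Set.ncard_le_card F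
    _ = 2 ^ Fintype.card α := by rw [Nat.card_eq_fintype_card, Fintype.card_finset]
    _ ≤ Fintype.card α + 1 := by interval_cases Fintype.card α <;> rfl

end Finset

namespace SepProperty

open Finset

variable {α : Type*} [DecidableEq α] {ε : ℝ} {F : Set (Finset α)}

lemma eq_of_card_symmDiff_le (hsep : SepProperty ε F) (hε : 0 ≤ ε) {S T : Finset α}
    (hT : T ∈ F) (hS : S ∈ F) (h6 : 6 ≤ ε * #S) (hΔ : (#(symmDiff T S) : ℝ) ≤ ε * #S) :
    T = S := by
  by_contra hne
  have hmax : ε * #S ≤ ε * ((max #T #S : ℕ) : ℝ) :=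
    mul_le_mul_of_nonneg_left (by exact_mod_cast le_max_right _ _) hε
  linarith [hsep T hT S hS hne (h6.trans hmax)]

lemma ncard_le_card_add_one [Fintype α] (hsep : SepProperty ε F) (hε : 3 ≤ ε) :
    F.ncard ≤ Fintype.card α + 1 := by
  by_cases hlarge : ∃ S ∈ F, 6 ≤ ε * #S
  · obtain ⟨S, hS, h6⟩ := hlarge
    have heq : ∀ {A B}, A ∈ F → B ∈ F → 6 ≤ ε * #B → #A ≤ #B → A = B := by
      intro A B hA hB h6B hAB
      refine hsep.eq_of_card_symmDiff_le (by linarith) hA hB h6B ?_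
      have hcard : #(symmDiff A B) ≤ 2 * #B :=
        (card_le_card symmDiff_subset_union).trans ((card_union_le _ _).trans (by omega))
      calc (#(symmDiff A B) : ℝ) ≤ 2 * #B := by exact_mod_cast hcard
        _ ≤ ε * #B := by gcongr; linarith
    have hF : F ⊆ {S} := fun T hT => by
      rcases le_total #T #S with hTS | hST
      · exact heq hT hS h6 hTS
      · exact (heq hS hT (h6.trans (by gcongr)) hST).symm
    exact (Set.ncard_le_ncard hF).trans (by simp)
  · push Not at hlarge
    have hF : F ⊆ {S | #S ≤ 1} := fun S hS => by
      have : (#S : ℝ) < 2 := by nlinarith [hlarge S hS]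
      exact Nat.lt_succ_iff.1 (by exact_mod_cast this)
    refine (Set.ncard_le_ncard hF).trans ((ncard_setOf_card_le 1).trans ?_)
    simp [sum_range_succ, add_comm]

end SepProperty

namespace TransitionGraph

variable {V E U : Type*} (G : TransitionGraph V E U)

def IsWalk : V → V → List E → Prop
  | u, v, [] => u = v
  | u, v, e :: P => G.src e = u ∧ IsWalk (G.tgt e) v P

def walkEnd : V → List E → V
  | u, [] => u
  | _, e :: P => walkEnd (G.tgt e) P

variable {G}

lemma isWalk_iff {u v : V} {P : List E} :
    G.IsWalk u v P ↔ List.IsChain (fun e f => G.tgt e = G.src f) P ∧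
      ((P = [] ∧ u = v) ∨ ∃ h : P ≠ [], G.src (P.head h) = u ∧ G.tgt (P.getLast h) = v) := by
  induction P generalizing u with
  | nil => simp [IsWalk]
  | cons e P ih =>
    cases P with
    | nil => simp [IsWalk, eq_comm]
    | cons f Q =>
      simp only [IsWalk] at ih ⊢
      rw [ih]
      simp [List.isChain_cons_cons]
      tauto

lemma isSTPath_iff_isWalk {P : List E} : G.IsSTPath P ↔ G.IsWalk G.s G.t P :=
  isWalk_iff.symm

lemma IsWalk.walkEnd_eq {u v : V} {P : List E} (h : G.IsWalk u v P) : G.walkEnd u P = v := by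
  induction P generalizing u with
  | nil => exact h
  | cons e P ih => exact ih h.2

lemma isWalk_append {u w : V} {P Q : List E} :
    G.IsWalk u w (P ++ Q) ↔ G.IsWalk u (G.walkEnd u P) P ∧ G.IsWalk (G.walkEnd u P) w Q := by
  induction P generalizing u with
  | nil => simp [IsWalk, walkEnd]
  | cons e P ih => simp [IsWalk, walkEnd, ih, and_assoc]

lemma IsWalk.append {u v w : V} {P Q : List E} (hP : G.IsWalk u v P) (hQ : G.IsWalk v w Q) :
    G.IsWalk u w (P ++ Q) := by
  rw [isWalk_append, hP.walkEnd_eq]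
  exact ⟨hP, hQ⟩

lemma IsWalk.take {u w : V} {P : List E} (h : G.IsWalk u w P) (i : ℕ) :
    G.IsWalk u (G.walkEnd u (P.take i)) (P.take i) := by
  rw [← List.take_append_drop i P, isWalk_append] at h
  exact h.1

lemma IsWalk.drop {u w : V} {P : List E} (h : G.IsWalk u w P) (i : ℕ) :
    G.IsWalk (G.walkEnd u (P.take i)) w (P.drop i) := by
  rw [← List.take_append_drop i P, isWalk_append] at h
  exact h.2

open Finset

variable [DecidableEq U]

lemma mem_labelSet {P : List E} {x : U} : x ∈ G.labelSet P ↔ ∃ e ∈ P, G.lab e = some x := by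
  simp [labelSet]

lemma labelSet_append (P Q : List E) : G.labelSet (P ++ Q) = G.labelSet P ∪ G.labelSet Q := by
  simp [labelSet]

lemma labelSet_mono {P Q : List E} (h : P ⊆ Q) : G.labelSet P ⊆ G.labelSet Q := fun x hx => by
  obtain ⟨e, he, hx⟩ := mem_labelSet.1 hx
  exact mem_labelSet.2 ⟨e, h he, hx⟩

lemma labelSet_take_mono (P : List E) {i j : ℕ} (h : i ≤ j) :
    G.labelSet (P.take i) ⊆ G.labelSet (P.take j) :=
  labelSet_mono (List.take_prefix_take_left h).subset

lemma card_labelSet_le_length (P : List E) : #(G.labelSet P) ≤ P.length :=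
  (List.toFinset_card_le _).trans (List.length_filterMap_le _ _)

lemma card_labelSet_take_succ_le (P : List E) (i : ℕ) :
    #(G.labelSet (P.take (i + 1))) ≤ #(G.labelSet (P.take i)) + 1 := by
  rw [List.take_add_one, labelSet_append]
  refine (card_union_le _ _).trans (Nat.add_le_add_left ?_ _)
  exact (card_labelSet_le_length _).trans (by cases P[i]? <;> simp)

variable (G) in
/-- Once `r` reaches the number of labels of `P` this is all of `P`, not the shortest prefix
carrying `r` labels, so that the late checkpoints of an `(s,t)`-path are `t`. -/
noncomputable def prefixLen (P : List E) (r : ℕ) : ℕ :=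
  if r < #(G.labelSet P) then sInf {i | r ≤ #(G.labelSet (P.take i))} else P.length

variable (G) in
noncomputable def checkpoint (P : List E) (r : ℕ) : V :=
  G.walkEnd G.s (P.take (G.prefixLen P r))

lemma length_mem_of_lt_card {P : List E} {r : ℕ} (hr : r < #(G.labelSet P)) :
    P.length ∈ {i | r ≤ #(G.labelSet (P.take i))} := by
  simpa using hr.le

lemma prefixLen_of_card_le {P : List E} {r : ℕ} (hr : #(G.labelSet P) ≤ r) :
    G.prefixLen P r = P.length := by
  simp [prefixLen, hr.not_gt]

lemma prefixLen_le_length (P : List E) (r : ℕ) : G.prefixLen P r ≤ P.length := by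
  unfold prefixLen
  split_ifs with hr
  · exact Nat.sInf_le (length_mem_of_lt_card hr)
  · rfl

lemma prefixLen_zero {P : List E} (h : 0 < #(G.labelSet P)) : G.prefixLen P 0 = 0 := by
  simp [prefixLen, h]

lemma prefixLen_mono (P : List E) : Monotone (G.prefixLen P) := by
  intro r r' h
  by_cases hr' : r' < #(G.labelSet P)
  · have hr : r < #(G.labelSet P) := lt_of_le_of_lt h hr'
    simp only [prefixLen, hr, hr', if_true]
    exact Nat.sInf_le (h.trans (Nat.sInf_mem ⟨_, length_mem_of_lt_card hr'⟩))
  · rw [prefixLen_of_card_le (not_lt.1 hr')]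
    exact prefixLen_le_length P r

lemma card_labelSet_take_prefixLen (P : List E) (r : ℕ) :
    #(G.labelSet (P.take (G.prefixLen P r))) = min r #(G.labelSet P) := by
  rcases lt_or_ge r #(G.labelSet P) with hr | hr
  · have hmem := Nat.sInf_mem ⟨_, length_mem_of_lt_card hr⟩
    simp only [prefixLen, hr, if_true, min_eq_left hr.le]
    refine le_antisymm ?_ hmem
    rcases hi : sInf {i | r ≤ #(G.labelSet (P.take i))} with _ | i
    · simp [labelSet]
    · have hlt : ¬ r ≤ #(G.labelSet (P.take i)) :=
        Nat.notMem_of_lt_sInf (s := {i | r ≤ #(G.labelSet (P.take i))}) (by omega)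
      have := card_labelSet_take_succ_le (G := G) P i
      omega
  · rw [prefixLen_of_card_le hr, List.take_length, min_eq_right hr]

lemma checkpoint_zero {P : List E} (h : 0 < #(G.labelSet P)) : G.checkpoint P 0 = G.s := by
  simp [checkpoint, prefixLen_zero h, walkEnd]

lemma IsWalk.checkpoint_of_card_le {P : List E} (hP : G.IsWalk G.s G.t P) {r : ℕ}
    (hr : #(G.labelSet P) ≤ r) : G.checkpoint P r = G.t := by
  rw [checkpoint, prefixLen_of_card_le hr, List.take_length, hP.walkEnd_eq]

lemma labelSet_take_subset_of_splice {P₁ P₂ : List E} (h₁ : G.IsWalk G.s G.t P₁)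
    (h₂ : G.IsWalk G.s G.t P₂) {a₁ b₁ a₂ b₂ d : ℕ} (hab₁ : a₁ ≤ b₁) (hab₂ : a₂ ≤ b₂)
    (hva : G.walkEnd G.s (P₁.take a₁) = G.walkEnd G.s (P₂.take a₂))
    (hvb : G.walkEnd G.s (P₁.take b₁) = G.walkEnd G.s (P₂.take b₂))
    (hd₁ : #(G.labelSet (P₁.take b₁)) ≤ #(G.labelSet (P₁.take a₁)) + d)
    (hd₂ : #(G.labelSet (P₂.take b₂)) ≤ #(G.labelSet (P₂.take a₂)) + d)
    (hclose : ∀ T ∈ G.labelFamily, #(symmDiff T (G.labelSet P₂)) ≤ 2 * d → T = G.labelSet P₂)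
    (ha : G.labelSet (P₁.take a₁) ⊆ G.labelSet P₂) :
    G.labelSet (P₁.take b₁) ⊆ G.labelSet P₂ := by
  set M := (P₁.take b₁).drop a₁
  have hsplit : P₁.take b₁ = P₁.take a₁ ++ M := by
    rw [← List.take_append_drop a₁ (P₁.take b₁), List.take_take, min_eq_left hab₁]
  have hM : G.IsWalk (G.walkEnd G.s (P₂.take a₂)) (G.walkEnd G.s (P₂.take b₂)) M := by
    have := (h₁.take b₁).drop a₁
    rwa [List.take_take, min_eq_left hab₁, hva, hvb] at this
  set R := P₂.take a₂ ++ M ++ P₂.drop b₂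
  have hR : G.labelSet R ∈ G.labelFamily :=
    ⟨R, isSTPath_iff_isWalk.2 (((h₂.take a₂).append hM).append (h₂.drop b₂)), rfl⟩
  have hP₂ : G.labelSet P₂ = G.labelSet (P₂.take b₂) ∪ G.labelSet (P₂.drop b₂) := by
    rw [← labelSet_append, List.take_append_drop]
  have hΔ : #(symmDiff (G.labelSet R) (G.labelSet P₂)) ≤ 2 * d := by
    have hsub := symmDiff_splice_subset (M := G.labelSet M) (hP₂ ▸ ha)
      (labelSet_take_mono P₂ hab₂)
    rw [← labelSet_append, ← labelSet_append, ← hP₂] at hsub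
    refine (card_le_card hsub).trans ((card_union_le _ _).trans ?_)
    rw [← union_sdiff_left, ← labelSet_append, ← hsplit,
      card_sdiff_of_subset (labelSet_take_mono P₁ hab₁),
      card_sdiff_of_subset (labelSet_take_mono P₂ hab₂)]
    omega
  have hMP₂ : G.labelSet M ⊆ G.labelSet P₂ :=
    hclose _ hR hΔ ▸ labelSet_mono fun e he => by simp [R, he]
  rw [hsplit, labelSet_append]
  exact union_subset ha hMP₂

lemma labelSet_subset_of_checkpoint_eq {P₁ P₂ : List E} (h₁ : G.IsWalk G.s G.t P₁)
    (h₂ : G.IsWalk G.s G.t P₂) {d : ℕ} (hd : 0 < d)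
    (hv : ∀ j, G.checkpoint P₁ (j * d) = G.checkpoint P₂ (j * d))
    (hclose : ∀ T ∈ G.labelFamily, #(symmDiff T (G.labelSet P₂)) ≤ 2 * d → T = G.labelSet P₂) :
    G.labelSet P₁ ⊆ G.labelSet P₂ := by
  have hprefix : ∀ j, G.labelSet (P₁.take (G.prefixLen P₁ (j * d))) ⊆ G.labelSet P₂ := by
    intro j
    induction j with
    | zero =>
      have := card_labelSet_take_prefixLen (G := G) P₁ 0
      rw [min_eq_left (Nat.zero_le _), card_eq_zero] at this
      simp [this]
    | succ j ih =>
      have hmono : j * d ≤ (j + 1) * d := Nat.mul_le_mul_right d j.le_succ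
      refine labelSet_take_subset_of_splice h₁ h₂ (prefixLen_mono P₁ hmono)
        (prefixLen_mono P₂ hmono) (hv j) (hv (j + 1)) ?_ ?_ hclose ih <;>
      · rw [card_labelSet_take_prefixLen, card_labelSet_take_prefixLen, add_mul, one_mul]
        omega
  have := hprefix #(G.labelSet P₁)
  rwa [prefixLen_of_card_le (Nat.le_mul_of_pos_right _ hd), List.take_length] at this

lemma labelSet_eq_of_checkpoint_eq {ε : ℝ} (hε : 0 < ε) (hsep : SepProperty ε G.labelFamily)
    {P₁ P₂ : List E} (h₁ : G.IsSTPath P₁) (h₂ : G.IsSTPath P₂)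
    (hcard : #(G.labelSet P₁) = #(G.labelSet P₂)) (h6 : 6 ≤ ε * #(G.labelSet P₁))
    (hv : ∀ j < ⌊3 / ε⌋₊, G.checkpoint P₁ ((j + 1) * ⌈ε * #(G.labelSet P₁) / 3⌉₊) =
      G.checkpoint P₂ ((j + 1) * ⌈ε * #(G.labelSet P₁) / 3⌉₊)) :
    G.labelSet P₁ = G.labelSet P₂ := by
  rw [isSTPath_iff_isWalk] at h₁ h₂
  set w := #(G.labelSet P₁)
  set d := ⌈ε * w / 3⌉₊
  have hεw : 0 < ε * w := by linarith
  have hw : 0 < w := by exact_mod_cast pos_of_mul_pos_right hεw hε.le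
  have hd : 0 < d := Nat.ceil_pos.2 (by positivity)
  have h2d : (2 * d : ℝ) ≤ ε * w := by
    linarith [Nat.ceil_lt_add_one (show 0 ≤ ε * w / 3 by positivity)]
  have hwd : w ≤ (⌊3 / ε⌋₊ + 1) * d := by
    have hL : 3 / ε < ⌊3 / ε⌋₊ + 1 := Nat.lt_floor_add_one _
    have hdw : ε * w / 3 ≤ d := Nat.le_ceil _
    have : (w : ℝ) ≤ (⌊3 / ε⌋₊ + 1) * d :=
      calc (w : ℝ) = 3 / ε * (ε * w / 3) := by field_simp
        _ ≤ (⌊3 / ε⌋₊ + 1) * d := by gcongr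
    exact_mod_cast this
  have hv' : ∀ j, G.checkpoint P₁ (j * d) = G.checkpoint P₂ (j * d) := by
    rintro (_ | j)
    · rw [zero_mul, checkpoint_zero hw, checkpoint_zero (hcard ▸ hw)]
    · by_cases hj : j < ⌊3 / ε⌋₊
      · exact hv j hj
      · have hr : w ≤ (j + 1) * d := hwd.trans (Nat.mul_le_mul_right d (by omega))
        rw [h₁.checkpoint_of_card_le hr, h₂.checkpoint_of_card_le (hcard ▸ hr)]
  have hclose : ∀ {P}, G.IsWalk G.s G.t P → #(G.labelSet P) = w →
      ∀ T ∈ G.labelFamily, #(symmDiff T (G.labelSet P)) ≤ 2 * d → T = G.labelSet P := by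
    intro P hP hPw T hT hΔ
    refine hsep.eq_of_card_symmDiff_le hε.le hT ⟨P, isSTPath_iff_isWalk.2 hP, rfl⟩
      (hPw ▸ h6) (hPw ▸ le_trans ?_ h2d)
    exact_mod_cast hΔ
  exact (labelSet_subset_of_checkpoint_eq h₁ h₂ hd hv' (hclose h₂ hcard.symm)).antisymm
    (labelSet_subset_of_checkpoint_eq h₂ h₁ hd (fun j => (hv' j).symm) (hclose h₁ rfl))

lemma ncard_large_labelSets_le [Fintype V] [Fintype U] {ε : ℝ} (hε : 0 < ε)
    (hsep : SepProperty ε G.labelFamily) :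
    {S ∈ G.labelFamily | 6 ≤ ε * #S}.ncard ≤ Fintype.card U * Fintype.card V ^ ⌊3 / ε⌋₊ := by
  choose! path hpath hlabel using fun S (hS : S ∈ G.labelFamily) => hS
  let sketch (S : Finset U) : ℕ × (Fin ⌊3 / ε⌋₊ → V) :=
    (#S, fun j => G.checkpoint (path S) ((j + 1) * ⌈ε * #S / 3⌉₊))
  let T : Finset (ℕ × (Fin ⌊3 / ε⌋₊ → V)) := Icc 1 (Fintype.card U) ×ˢ univ
  calc {S ∈ G.labelFamily | 6 ≤ ε * #S}.ncard
      ≤ (T : Set (ℕ × (Fin ⌊3 / ε⌋₊ → V))).ncard := by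
        refine Set.ncard_le_ncard_of_injOn sketch ?_ ?_ (finite_toSet T)
        · rintro S ⟨-, h6⟩
          have hS : 0 < #S := by
            exact_mod_cast pos_of_mul_pos_right (b := (#S : ℝ)) (by linarith) hε.le
          simpa [T, sketch, Nat.one_le_iff_ne_zero, hS.ne'] using card_le_univ S
        · rintro S₁ ⟨hS₁, h6₁⟩ S₂ ⟨hS₂, -⟩ heq
          obtain ⟨hcard, hv⟩ := Prod.mk.inj heq
          have := labelSet_eq_of_checkpoint_eq hε hsep (hpath S₁ hS₁) (hpath S₂ hS₂)
            (by rw [hlabel S₁ hS₁, hlabel S₂ hS₂, hcard]) (by rwa [hlabel S₁ hS₁])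
            (fun j hj => by simpa [hlabel S₁ hS₁, hcard] using congrFun hv ⟨j, hj⟩)
          rwa [hlabel S₁ hS₁, hlabel S₂ hS₂] at this
    _ = Fintype.card U * Fintype.card V ^ ⌊3 / ε⌋₊ := by simp [T]

lemma ncard_labelFamily_le_of_lt_three [Fintype V] [Fintype U] {ε : ℝ} (hε : 0 < ε)
    (hε3 : ε < 3) (hm : 2 ≤ Fintype.card U) (hsep : SepProperty ε G.labelFamily) :
    G.labelFamily.ncard ≤
      Fintype.card U * Fintype.card V ^ ⌊3 / ε⌋₊ + Fintype.card U ^ ⌊6 / ε⌋₊ := by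
  have ht : 2 ≤ ⌊6 / ε⌋₊ := Nat.le_floor (by rw [le_div_iff₀ hε]; push_cast; linarith)
  have hsplit : G.labelFamily ⊆ {S ∈ G.labelFamily | 6 ≤ ε * #S} ∪ {S | #S ≤ ⌊6 / ε⌋₊} :=
    fun S hS => by
      by_cases h6 : 6 ≤ ε * #S
      · exact Or.inl ⟨hS, h6⟩
      · exact Or.inr (Nat.le_floor (by rw [le_div_iff₀ hε]; linarith) : #S ≤ ⌊6 / ε⌋₊)
  calc G.labelFamily.ncard
      ≤ {S ∈ G.labelFamily | 6 ≤ ε * #S}.ncard + {S : Finset U | #S ≤ ⌊6 / ε⌋₊}.ncard :=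
        (Set.ncard_le_ncard hsplit).trans (Set.ncard_union_le _ _)
    _ ≤ _ := add_le_add (G.ncard_large_labelSets_le hε hsep)
        ((ncard_setOf_card_le _).trans (Nat.sum_range_choose_le_pow hm ht))

end TransitionGraph

theorem stmt1_general {V E U : Type*} [Fintype V] [Fintype U] [DecidableEq U]
    (G : TransitionGraph V E U) (ε : ℝ) (hε : 0 < ε)
    (hn : 1 ≤ Fintype.card V) (hm : 1 ≤ Fintype.card U)
    (hsep : SepProperty ε G.labelFamily) :
    ((G.labelFamily).ncard : ℝ) ≤
      (Fintype.card U : ℝ) * (Fintype.card V : ℝ) ^ ((3 : ℝ) / ε) +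
        (Fintype.card U : ℝ) ^ ((6 : ℝ) / ε) := by
  have hn' : (1 : ℝ) ≤ Fintype.card V := by exact_mod_cast hn
  have hm' : (1 : ℝ) ≤ Fintype.card U := by exact_mod_cast hm
  by_cases hmain : ε < 3 ∧ 2 ≤ Fintype.card U
  · calc (G.labelFamily.ncard : ℝ)
        ≤ Fintype.card U * (Fintype.card V : ℝ) ^ ⌊3 / ε⌋₊ +
            (Fintype.card U : ℝ) ^ ⌊6 / ε⌋₊ := by
          exact_mod_cast G.ncard_labelFamily_le_of_lt_three hε hmain.1 hmain.2 hsep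
      _ ≤ _ := by
        gcongr
        · exact Real.pow_floor_le_rpow hn' (by positivity)
        · exact Real.pow_floor_le_rpow hm' (by positivity)
  · have h : G.labelFamily.ncard ≤ Fintype.card U + 1 := by
      rcases not_and_or.1 hmain with hε3 | hm1
      · exact hsep.ncard_le_card_add_one (not_lt.1 hε3)
      · exact Finset.ncard_le_card_add_one_of_card_le_one _ (by omega)
    have hA : 1 ≤ (Fintype.card V : ℝ) ^ ((3 : ℝ) / ε) := Real.one_le_rpow hn' (by positivity)
    have hB : 1 ≤ (Fintype.card U : ℝ) ^ ((6 : ℝ) / ε) := Real.one_le_rpow hm' (by positivity)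
    calc (G.labelFamily.ncard : ℝ) ≤ Fintype.card U + 1 := by exact_mod_cast h
      _ ≤ _ := by nlinarith

theorem stmt1 {V E U : Type*} [Fintype V] [Fintype E] [Fintype U] [DecidableEq U]
    (G : TransitionGraph V E U) (ε : ℝ) (hε : 0 < ε)
    (hn : 1 ≤ Fintype.card V) (hm : 1 ≤ Fintype.card U)
    (hsep : SepProperty ε G.labelFamily) :
    ((G.labelFamily).ncard : ℝ) ≤
      (Fintype.card U : ℝ) * (Fintype.card V : ℝ) ^ ((3 : ℝ) / ε) +
        (Fintype.card U : ℝ) ^ ((6 : ℝ) / ε) :=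
  stmt1_general G ε hε hn hm hsep
end

section
/- Let A be a trimmed NFA over the alphabet ℕ with a finite state set. If the family {content(w) : w is a word accepted by A} is infinite, then there exist a finite set S ⊆ ℕ and an infinite set T ⊆ ℕ such that for every t ∈ T the set S ∪ {t} is the content of some word accepted by A. -/
/-- An NFA is trimmed if every state lies on an accepting run. -/
def Trimmed {α σ : Type*} (M : NFA α σ) : Prop :=
  ∀ q : σ, ∃ u v : List α,
    q ∈ M.evalFrom M.start u ∧ (M.evalFrom {q} v ∩ M.accept).Nonempty

private lemma evalFrom_mono {α σ : Type*} (M : NFA α σ) :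
    ∀ (w : List α) (S S' : Set σ), S ⊆ S' → M.evalFrom S w ⊆ M.evalFrom S' w := by
  intro w
  induction w with
  | nil => intro S S' h; simpa using h
  | cons a w ih =>
    intro S S' h
    have : M.stepSet S a ⊆ M.stepSet S' a := by
      intro x hx
      rw [NFA.mem_stepSet] at hx ⊢
      obtain ⟨t, ht, hx⟩ := hx
      exact ⟨t, h ht, hx⟩
    exact ih _ _ this

private lemma evalFrom_nonempty {α σ : Type*} (M : NFA α σ) :
    ∀ (w : List α) (S : Set σ), (M.evalFrom S w).Nonempty → S.Nonempty := by
  intro w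
  induction w with
  | nil => intro S h; simpa using h
  | cons a w ih =>
    intro S h
    have h1 : (M.stepSet S a).Nonempty := ih _ h
    obtain ⟨x, hx⟩ := h1
    rw [NFA.mem_stepSet] at hx
    obtain ⟨t, ht, _⟩ := hx
    exact ⟨t, ht⟩

private lemma evalFrom_append {α σ : Type*} (M : NFA α σ) (S : Set σ) (x y : List α) :
    M.evalFrom S (x ++ y) = M.evalFrom (M.evalFrom S x) y := by
  simp [NFA.evalFrom, List.foldl_append]

theorem stmt11 {σ : Type*} [Fintype σ] (M : NFA ℕ σ) (hT : Trimmed M)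
    (h : {S : Finset ℕ | ∃ w ∈ M.accepts, w.toFinset = S}.Infinite) :
    ∃ (S : Finset ℕ) (T : Set ℕ), T.Infinite ∧
      ∀ t ∈ T, ∃ w ∈ M.accepts, w.toFinset = insert t S := by
  classical
  set L : Set ℕ := {a | ∃ w ∈ M.accepts, a ∈ w} with hLdef
  -- L is infinite
  have hLinf : L.Infinite := by
    by_contra hfin
    rw [Set.not_infinite] at hfin
    apply h
    have hsub : {S : Finset ℕ | ∃ w ∈ M.accepts, w.toFinset = S}
        ⊆ ↑(hfin.toFinset.powerset) := by
      intro S hS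
      obtain ⟨w, hw, rfl⟩ := hS
      simp only [Finset.coe_powerset, Set.mem_preimage, Set.mem_powerset_iff,
        Finset.coe_subset, Finset.subset_iff]
      intro a ha
      rw [List.mem_toFinset] at ha
      rw [Set.Finite.mem_toFinset]
      exact ⟨w, hw, ha⟩
    exact Set.Finite.subset (Finset.finite_toSet _) hsub
  -- each letter in L has some transition
  have htrans : ∀ a ∈ L, ∃ p : σ × σ, p.2 ∈ M.step p.1 a := by
    intro a ha
    obtain ⟨w, hw, haw⟩ := ha
    obtain ⟨x, y, rfl⟩ := List.append_of_mem haw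
    obtain ⟨qf, _, hqf⟩ := hw
    rw [NFA.eval] at hqf
    rw [evalFrom_append] at hqf
    have hne : (M.evalFrom (M.evalFrom M.start x) (a :: y)).Nonempty := ⟨qf, hqf⟩
    have : (M.evalFrom (M.stepSet (M.evalFrom M.start x) a) y).Nonempty := hne
    have h2 : (M.stepSet (M.evalFrom M.start x) a).Nonempty := evalFrom_nonempty M y _ this
    obtain ⟨q', hq'⟩ := h2
    rw [NFA.mem_stepSet] at hq'
    obtain ⟨q, _, hstep⟩ := hq'
    exact ⟨(q, q'), hstep⟩
  haveI : Nonempty (σ × σ) := by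
    obtain ⟨a, ha⟩ := hLinf.nonempty
    obtain ⟨p, _⟩ := htrans a ha
    exact ⟨p⟩
  -- choose a transition for each letter
  let g : ℕ → σ × σ := fun a => if h : a ∈ L then (htrans a h).choose else Classical.arbitrary _
  have hg : ∀ a ∈ L, (g a).2 ∈ M.step (g a).1 a := by
    intro a ha
    simp only [g, dif_pos ha]
    exact (htrans a ha).choose_spec
  -- pigeonhole: some fiber infinite
  have hfib : ∃ p : σ × σ, {a ∈ L | g a = p}.Infinite := by
    by_contra hc
    push_neg at hc
    have hsub : L ⊆ ⋃ p : σ × σ, {a ∈ L | g a = p} :=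
      fun a ha => Set.mem_iUnion.2 ⟨g a, ha, rfl⟩
    exact hLinf (Set.Finite.subset (Set.finite_iUnion hc) hsub)
  obtain ⟨⟨q, q'⟩, hfib⟩ := hfib
  obtain ⟨u, _, hu, _⟩ := hT q
  obtain ⟨_, v, _, ⟨qf, hqfv, hqfacc⟩⟩ := hT q'
  refine ⟨u.toFinset ∪ v.toFinset, {a ∈ L | g a = (q, q')}, hfib, ?_⟩
  intro t ht
  obtain ⟨htL, htg⟩ := ht
  have hstep : q' ∈ M.step q t := by
    have := hg t htL
    rw [htg] at this
    exact this
  refine ⟨u ++ t :: v, ?_, ?_⟩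
  · refine ⟨qf, hqfacc, ?_⟩
    show qf ∈ M.evalFrom M.start (u ++ t :: v)
    rw [evalFrom_append]
    show qf ∈ M.evalFrom (M.stepSet (M.evalFrom M.start u) t) v
    apply evalFrom_mono M v {q'}
    · intro x hx
      rw [Set.mem_singleton_iff] at hx
      subst hx
      rw [NFA.mem_stepSet]
      exact ⟨q, hu, hstep⟩
    · exact hqfv
  · simp [List.toFinset_append, Finset.union_insert]
end
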